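/- Let H be a finite set with |H| = N ≥ 4, let (X_t)_{t≥1} be i.i.d. uniform draws from H, let c, a₁, a₂, a₃ ∈ H be four distinct elements, and let B be a Bernoulli(α) random variable (0 ≤ α ≤ 1) independent of (X_t). Define the time-sharing delay D = min(τ_c, σ_{{a₁,a₂,a₃}}) if B = 1, and D = τ_c if B = 0. Then E[D] = (1 − α)·N + α·(3/4)·N = (1 − α/4)·N. -/

import Mathlib

open MeasureTheory ProbabilityTheory

/-- The collection time `σ_A`: the smallest time `t ≥ 1` such that every element of `A`
has appeared among `X_1, …, X_t` (with the convention `sInf ∅ = 0`). -/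
noncomputable def collectTime {Ω H : Type*} (X : ℕ → Ω → H) (A : Set H) (ω : Ω) : ℕ :=
  sInf {t : ℕ | ∀ a ∈ A, ∃ s, 1 ≤ s ∧ s ≤ t ∧ X s ω = a}

/-- The first hitting time `τ_c`: the first time `t ≥ 1` with `X_t = c`. -/
noncomputable def hitTime {Ω H : Type*} (X : ℕ → Ω → H) (c : H) (ω : Ω) : ℕ :=
  collectTime X {c} ω


/-!
Almost surely every element of `H` eventually appears. On that event the first-to-complete time
`min (τ_c, σ_{a₁,a₂,a₃})` is the maximum of the hitting times `T_i` of the pairs `{c, aᵢ}`, and the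
minimum of several `T_i` is the hitting time of the union of their pairs. The hitting time of a
`k`-element set is geometric with mean `N / k`, so max–min inclusion–exclusion gives
`E[max T_i] = 3 (N/2) - 3 (N/3) + N/4 = 3N/4`, while `E[τ_c] = N`. The flag `B` is independent of
the draws, so the mean delay is the `(α, 1 - α)` mixture of these two means.
-/

open scoped ENNReal

section Pathwise

variable {Ω H : Type*}

/-- As for `collectTime`, the value is `sInf ∅ = 0` if `S` is never hit. -/
noncomputable def firstHit (X : ℕ → Ω → H) (S : Set H) (ω : Ω) : ℕ :=
  sInf {t : ℕ | ∃ s, 1 ≤ s ∧ s ≤ t ∧ X s ω ∈ S}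

def avoidSet (X : ℕ → Ω → H) (S : Set H) (n : ℕ) : Set Ω :=
  ⋂ s ∈ Finset.Icc 1 n, X s ⁻¹' Sᶜ

lemma mem_avoidSet {X : ℕ → Ω → H} {S : Set H} {n : ℕ} {ω : Ω} :
    ω ∈ avoidSet X S n ↔ ∀ s, 1 ≤ s → s ≤ n → X s ω ∉ S := by
  simp [avoidSet, and_imp]

lemma avoidSet_union (X : ℕ → Ω → H) (S T : Set H) (n : ℕ) :
    avoidSet X (S ∪ T) n = avoidSet X S n ∩ avoidSet X T n := by
  ext ω
  simp only [Set.mem_inter_iff, mem_avoidSet, Set.mem_union, not_or]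
  grind

lemma Nat.lt_sInf_iff_of_isUpperSet {U : Set ℕ} (hup : IsUpperSet U) (hU : U.Nonempty)
    {n : ℕ} : n < sInf U ↔ n ∉ U :=
  ⟨fun h hn => (Nat.sInf_le hn).not_gt h,
    fun h => lt_of_not_ge fun hle => h (hup hle (Nat.sInf_mem hU))⟩

lemma isUpperSet_setOf_exists_le (p : ℕ → Prop) : IsUpperSet {t : ℕ | ∃ s, 1 ≤ s ∧ s ≤ t ∧ p s} :=
  fun _ _ htt ⟨s, h1, h2, h3⟩ => ⟨s, h1, h2.trans htt, h3⟩

lemma lt_firstHit_iff {X : ℕ → Ω → H} {S : Set H} {ω : Ω} (hS : ∃ s, 1 ≤ s ∧ X s ω ∈ S)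
    {n : ℕ} : n < firstHit X S ω ↔ ω ∈ avoidSet X S n := by
  obtain ⟨s, hs1, hsS⟩ := hS
  rw [firstHit, Nat.lt_sInf_iff_of_isUpperSet (isUpperSet_setOf_exists_le _)
    ⟨s, s, hs1, le_rfl, hsS⟩, mem_avoidSet]
  simp

lemma lt_collectTime_iff {X : ℕ → Ω → H} {A : Set H} {ω : Ω} (hA : A.Finite)
    (hseen : ∀ a ∈ A, ∃ s, 1 ≤ s ∧ X s ω = a) {n : ℕ} :
    n < collectTime X A ω ↔ ∃ a ∈ A, ω ∈ avoidSet X {a} n := by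
  choose! time htime1 htime using hseen
  obtain ⟨T, hT⟩ := (hA.image time).bddAbove
  have hup : IsUpperSet {t : ℕ | ∀ a ∈ A, ∃ s, 1 ≤ s ∧ s ≤ t ∧ X s ω = a} :=
    fun _ _ htt h a ha => isUpperSet_setOf_exists_le _ htt (h a ha)
  rw [collectTime, Nat.lt_sInf_iff_of_isUpperSet hup
    ⟨T, fun a ha => ⟨time a, htime1 a ha, hT ⟨a, ha, rfl⟩, htime a ha⟩⟩]
  simp [mem_avoidSet]

lemma hitTime_eq_firstHit (X : ℕ → Ω → H) (c : H) : hitTime X c = firstHit X {c} := by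
  funext ω
  simp [hitTime, collectTime, firstHit]

lemma min_firstHit_eq_firstHit_union {X : ℕ → Ω → H} {S T : Set H} {ω : Ω}
    (hS : ∃ s, 1 ≤ s ∧ X s ω ∈ S) (hT : ∃ s, 1 ≤ s ∧ X s ω ∈ T) :
    min (firstHit X S ω) (firstHit X T ω) = firstHit X (S ∪ T) ω := by
  obtain ⟨s, hs1, hsS⟩ := hS
  refine eq_of_forall_lt_iff fun n => ?_
  rw [lt_min_iff, lt_firstHit_iff ⟨s, hs1, hsS⟩, lt_firstHit_iff hT,
    lt_firstHit_iff (S := S ∪ T) ⟨s, hs1, Or.inl hsS⟩, avoidSet_union, Set.mem_inter_iff]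

lemma min_hitTime_collectTime_eq_max_firstHit {X : ℕ → Ω → H} {ω : Ω}
    (hseen : ∀ h, ∃ s, 1 ≤ s ∧ X s ω = h) (c a₁ a₂ a₃ : H) :
    min (hitTime X c ω) (collectTime X {a₁, a₂, a₃} ω) =
      max (firstHit X {c, a₁} ω) (max (firstHit X {c, a₂} ω) (firstHit X {c, a₃} ω)) := by
  have hit : ∀ S : Set H, S.Nonempty → ∃ s, 1 ≤ s ∧ X s ω ∈ S := fun S ⟨h, hh⟩ =>
    let ⟨s, hs1, hs⟩ := hseen h; ⟨s, hs1, hs ▸ hh⟩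
  refine eq_of_forall_lt_iff fun n => ?_
  rw [lt_min_iff, lt_max_iff, lt_max_iff, hitTime_eq_firstHit,
    lt_firstHit_iff (hit _ (Set.singleton_nonempty c)),
    lt_collectTime_iff (Set.toFinite _) fun a _ => hseen a,
    lt_firstHit_iff (hit _ (Set.insert_nonempty _ _)),
    lt_firstHit_iff (hit _ (Set.insert_nonempty _ _)),
    lt_firstHit_iff (hit _ (Set.insert_nonempty _ _))]
  simp only [Set.insert_eq c, avoidSet_union, Set.mem_inter_iff, Set.mem_insert_iff,
    Set.mem_singleton_iff, exists_eq_or_imp, exists_eq_left]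
  tauto

lemma max_firstHit_add_firstHit_union {X : ℕ → Ω → H} {S₁ S₂ S₃ : Set H} {ω : Ω}
    (h₁ : ∃ s, 1 ≤ s ∧ X s ω ∈ S₁) (h₂ : ∃ s, 1 ≤ s ∧ X s ω ∈ S₂)
    (h₃ : ∃ s, 1 ≤ s ∧ X s ω ∈ S₃) :
    max (firstHit X S₁ ω) (max (firstHit X S₂ ω) (firstHit X S₃ ω)) +
        (firstHit X (S₁ ∪ S₂) ω + firstHit X (S₁ ∪ S₃) ω + firstHit X (S₂ ∪ S₃) ω) =
      firstHit X S₁ ω + firstHit X S₂ ω + firstHit X S₃ ω + firstHit X (S₁ ∪ S₂ ∪ S₃) ω := by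
  have h₁₂ : ∃ s, 1 ≤ s ∧ X s ω ∈ S₁ ∪ S₂ := let ⟨s, hs, hsS⟩ := h₁; ⟨s, hs, Or.inl hsS⟩
  rw [← min_firstHit_eq_firstHit_union h₁₂ h₃, ← min_firstHit_eq_firstHit_union h₁ h₂,
    ← min_firstHit_eq_firstHit_union h₁ h₃, ← min_firstHit_eq_firstHit_union h₂ h₃]
  omega

end Pathwise

section Measurability

variable {Ω H : Type*} [MeasurableSpace Ω] [MeasurableSpace H] {X : ℕ → Ω → H}

lemma measurable_sInf_of_isUpperSet {U : Ω → Set ℕ} (hup : ∀ ω, IsUpperSet (U ω))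
    (hU : ∀ n, MeasurableSet {ω | n ∈ U ω}) : Measurable fun ω => sInf (U ω) := by
  refine measurable_of_Iic fun k => ?_
  have hle : (fun ω => sInf (U ω)) ⁻¹' Set.Iic k = {ω | k ∈ U ω} ∪ ⋂ n, {ω | n ∈ U ω}ᶜ := by
    ext ω
    rcases (U ω).eq_empty_or_nonempty with hempty | ⟨n, hn⟩
    · simp [hempty]
    · simp only [Set.mem_preimage, Set.mem_Iic, Set.mem_union, Set.mem_ofPred_eq,
        Set.mem_iInter, Set.mem_compl_iff]
      exact ⟨fun h => Or.inl (hup ω h (Nat.sInf_mem ⟨n, hn⟩)),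
        fun h => h.elim Nat.sInf_le fun h' => absurd hn (h' n)⟩
  rw [hle]
  exact (hU k).union (MeasurableSet.iInter fun n => (hU n).compl)

lemma measurable_firstHit (hX : ∀ t, Measurable (X t)) {S : Set H} (hS : MeasurableSet S) :
    Measurable (firstHit X S) :=
  measurable_sInf_of_isUpperSet (fun _ => isUpperSet_setOf_exists_le _) fun t => by measurability

lemma measurable_collectTime [Countable H] [MeasurableSingletonClass H]
    (hX : ∀ t, Measurable (X t)) (A : Set H) : Measurable (collectTime X A) := by
  refine measurable_sInf_of_isUpperSet
    (fun _ _ _ htt h a ha => isUpperSet_setOf_exists_le _ htt (h a ha)) fun t => ?_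
  simp only [Set.ofPred_forall]
  measurability

end Measurability

lemma ENNReal.tsum_one_sub_pow {a : ℝ≥0∞} (ha : a ≤ 1) : ∑' n : ℕ, (1 - a) ^ n = a⁻¹ := by
  rw [ENNReal.tsum_geometric, ENNReal.sub_sub_cancel ENNReal.one_ne_top ha]

lemma lintegral_natCast_eq_tsum_measure_lt {Ω : Type*} [MeasurableSpace Ω] {μ : Measure Ω}
    {f : Ω → ℕ} (hf : Measurable f) :
    ∫⁻ ω, (f ω : ℝ≥0∞) ∂μ = ∑' n : ℕ, μ {ω | n < f ω} := by
  have hmeas : ∀ n : ℕ, MeasurableSet {ω | n < f ω} := fun n => hf measurableSet_Ioi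
  have hcount : ∀ ω, (f ω : ℝ≥0∞) = ∑' n : ℕ, {ω | n < f ω}.indicator 1 ω := by
    intro ω
    rw [tsum_eq_sum (s := Finset.range (f ω)) fun n hn =>
      Set.indicator_of_notMem (by simpa using hn) _, Finset.sum_congr rfl fun n hn =>
      Set.indicator_of_mem (s := {ω | n < f ω}) (Finset.mem_range.1 hn) (1 : Ω → ℝ≥0∞)]
    simp
  simp_rw [hcount]
  rw [lintegral_tsum fun n => (measurable_one.indicator (hmeas n)).aemeasurable]
  simp_rw [lintegral_indicator_one (hmeas _)]

lemma integral_natCast_eq_toReal_lintegral {Ω : Type*} [MeasurableSpace Ω] {μ : Measure Ω}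
    {f : Ω → ℕ} (hf : Measurable f) : ∫ ω, (f ω : ℝ) ∂μ = (∫⁻ ω, (f ω : ℝ≥0∞) ∂μ).toReal := by
  simpa using integral_toReal (measurable_from_nat.comp hf).aemeasurable
    (ae_of_all μ fun ω => ENNReal.natCast_lt_top (f ω))

lemma measureReal_setOf_eq_false {Ω : Type*} [MeasurableSpace Ω] {μ : Measure Ω}
    [IsProbabilityMeasure μ] {B : Ω → Bool} (hB : Measurable B) :
    μ.real {ω | B ω = false} = 1 - μ.real {ω | B ω = true} := by
  have htrue : MeasurableSet {ω | B ω = true} := hB (measurableSet_singleton true)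
  rw [← probReal_compl_eq_one_sub htrue]
  congr 1
  ext ω
  simp

lemma lintegral_ite_eq_of_indepFun {Ω β : Type*} [MeasurableSpace Ω] [MeasurableSpace β]
    {μ : Measure Ω} {B : Ω → Bool} {Y : Ω → β} (hB : Measurable B) (hY : Measurable Y)
    (hBY : IndepFun B Y μ) {f g : β → ℝ≥0∞} (hf : Measurable f) (hg : Measurable g) :
    ∫⁻ ω, (if B ω then f (Y ω) else g (Y ω)) ∂μ =
      μ {ω | B ω = true} * ∫⁻ ω, f (Y ω) ∂μ + μ {ω | B ω = false} * ∫⁻ ω, g (Y ω) ∂μ := by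
  let flag (b : Bool) : Bool → ℝ≥0∞ := fun x => if x = b then 1 else 0
  have hflag : ∀ b, Measurable (flag b) := fun _ => measurable_of_countable _
  have hmass : ∀ b, ∫⁻ ω, flag b (B ω) ∂μ = μ {ω | B ω = b} := fun b =>
    (lintegral_congr fun ω => by simp [flag, Set.indicator_apply]).trans
      (lintegral_indicator_one (hB (measurableSet_singleton b)))
  have hsplit : ∀ ω, (if B ω then f (Y ω) else g (Y ω)) =
      flag true (B ω) * f (Y ω) + flag false (B ω) * g (Y ω) := by
    intro ω
    cases B ω <;> simp [flag]
  have hprod : ∀ b {φ : β → ℝ≥0∞}, Measurable φ →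
      ∫⁻ ω, flag b (B ω) * φ (Y ω) ∂μ = μ {ω | B ω = b} * ∫⁻ ω, φ (Y ω) ∂μ := fun b φ hφ => by
    rw [← hmass]
    exact lintegral_mul_eq_lintegral_mul_lintegral_of_indepFun'' ((hflag b).comp hB).aemeasurable
      (hφ.comp hY).aemeasurable (hBY.comp (hflag b) hφ)
  rw [lintegral_congr hsplit, lintegral_add_left (by fun_prop), hprod true hf, hprod false hg]

section UniformDraws

variable {Ω H : Type*} [MeasurableSpace Ω] {μ : Measure Ω}
  [Fintype H] [MeasurableSpace H] [MeasurableSingletonClass H] {X : ℕ → Ω → H}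

lemma measure_preimage_of_uniform {t : ℕ} (hX : Measurable (X t))
    (hunif : ∀ c, μ {ω | X t ω = c} = (Fintype.card H : ℝ≥0∞)⁻¹) (S : Set H) :
    μ (X t ⁻¹' S) = S.ncard / Fintype.card H := by
  classical
  rw [← S.coe_toFinset, ← sum_measure_preimage_singleton _ fun c _ =>
    hX (measurableSet_singleton c), Set.ncard_eq_toFinset_card']
  simp [Set.preimage, hunif, div_eq_mul_inv]

variable [IsProbabilityMeasure μ]

lemma measure_avoidSet (hX : ∀ t, Measurable (X t)) (hindep : iIndepFun X μ)
    (hunif : ∀ t c, μ {ω | X t ω = c} = (Fintype.card H : ℝ≥0∞)⁻¹) (S : Set H) (n : ℕ) :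
    μ (avoidSet X S n) = (1 - S.ncard / Fintype.card H) ^ n := by
  rw [avoidSet, hindep.measure_inter_preimage_eq_mul _ fun _ _ => S.toFinite.measurableSet.compl]
  simp_rw [Set.preimage_compl, prob_compl_eq_one_sub (hX _ S.toFinite.measurableSet),
    measure_preimage_of_uniform (hX _) (hunif _)]
  simp

lemma ae_exists_mem_of_uniform (hX : ∀ t, Measurable (X t)) (hindep : iIndepFun X μ)
    (hunif : ∀ t c, μ {ω | X t ω = c} = (Fintype.card H : ℝ≥0∞)⁻¹) {S : Set H}
    (hS : S.Nonempty) : ∀ᵐ ω ∂μ, ∃ s, 1 ≤ s ∧ X s ω ∈ S := by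
  have hq : 1 - (S.ncard : ℝ≥0∞) / Fintype.card H < 1 :=
    ENNReal.sub_lt_self ENNReal.one_ne_top one_ne_zero
      (ENNReal.div_pos (Nat.cast_ne_zero.2 ((Set.ncard_pos S.toFinite).2 hS).ne')
        (ENNReal.natCast_ne_top _)).ne'
  rw [ae_iff]
  refine le_antisymm (ge_of_tendsto' (ENNReal.tendsto_pow_atTop_nhds_zero_of_lt_one hq)
    fun n => ?_) bot_le
  rw [← measure_avoidSet hX hindep hunif]
  exact measure_mono fun ω hω => mem_avoidSet.2 fun s hs _ hsS => hω ⟨s, hs, hsS⟩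

lemma ae_forall_exists_eq_of_uniform (hX : ∀ t, Measurable (X t)) (hindep : iIndepFun X μ)
    (hunif : ∀ t c, μ {ω | X t ω = c} = (Fintype.card H : ℝ≥0∞)⁻¹) :
    ∀ᵐ ω ∂μ, ∀ h, ∃ s, 1 ≤ s ∧ X s ω = h :=
  ae_all_iff.2 fun h => (ae_exists_mem_of_uniform hX hindep hunif
    (Set.singleton_nonempty h)).mono fun _ ⟨s, hs, hsh⟩ => ⟨s, hs, hsh⟩

lemma lintegral_firstHit_of_uniform (hX : ∀ t, Measurable (X t)) (hindep : iIndepFun X μ)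
    (hunif : ∀ t c, μ {ω | X t ω = c} = (Fintype.card H : ℝ≥0∞)⁻¹) {S : Set H}
    (hS : S.Nonempty) : ∫⁻ ω, (firstHit X S ω : ℝ≥0∞) ∂μ = Fintype.card H / S.ncard := by
  have htail : ∀ n, μ {ω | n < firstHit X S ω} = (1 - S.ncard / Fintype.card H) ^ n := by
    intro n
    rw [← measure_avoidSet hX hindep hunif]
    exact measure_congr (Filter.eventuallyEq_set.2 <|
      (ae_exists_mem_of_uniform hX hindep hunif hS).mono fun ω h => lt_firstHit_iff h)
  have hle : (S.ncard : ℝ≥0∞) / Fintype.card H ≤ 1 := by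
    refine ENNReal.div_le_of_le_mul ?_
    rw [one_mul, ← Nat.card_eq_fintype_card]
    exact_mod_cast S.ncard_le_card
  rw [lintegral_natCast_eq_tsum_measure_lt (measurable_firstHit hX S.toFinite.measurableSet),
    tsum_congr htail, ENNReal.tsum_one_sub_pow hle,
    ENNReal.inv_div (Or.inl (ENNReal.natCast_ne_top _))
      (Or.inr (Nat.cast_ne_zero.2 ((Set.ncard_pos S.toFinite).2 hS).ne'))]

lemma lintegral_hitTime_of_uniform (hX : ∀ t, Measurable (X t)) (hindep : iIndepFun X μ)
    (hunif : ∀ t c, μ {ω | X t ω = c} = (Fintype.card H : ℝ≥0∞)⁻¹) (c : H) :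
    ∫⁻ ω, (hitTime X c ω : ℝ≥0∞) ∂μ = Fintype.card H := by
  simpa [hitTime_eq_firstHit] using
    lintegral_firstHit_of_uniform hX hindep hunif (Set.singleton_nonempty c)

lemma lintegral_max_firstHit_of_uniform (hX : ∀ t, Measurable (X t)) (hindep : iIndepFun X μ)
    (hunif : ∀ t c, μ {ω | X t ω = c} = (Fintype.card H : ℝ≥0∞)⁻¹) {S₁ S₂ S₃ : Set H}
    (h₁ : S₁.Nonempty) (h₂ : S₂.Nonempty) (h₃ : S₃.Nonempty) :
    ∫⁻ ω, ((max (firstHit X S₁ ω) (max (firstHit X S₂ ω) (firstHit X S₃ ω)) : ℕ) : ℝ≥0∞) ∂μ +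
        (Fintype.card H / (S₁ ∪ S₂).ncard + Fintype.card H / (S₁ ∪ S₃).ncard +
          Fintype.card H / (S₂ ∪ S₃).ncard) =
      Fintype.card H / S₁.ncard + Fintype.card H / S₂.ncard + Fintype.card H / S₃.ncard +
        Fintype.card H / (S₁ ∪ S₂ ∪ S₃).ncard := by
  have hT : ∀ S : Set H, Measurable (firstHit X S) := fun S =>
    measurable_firstHit hX S.toFinite.measurableSet
  have hE : ∀ S : Set H, S.Nonempty → ∫⁻ ω, (firstHit X S ω : ℝ≥0∞) ∂μ =
      Fintype.card H / S.ncard :=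
    fun S hS => lintegral_firstHit_of_uniform hX hindep hunif hS
  have hpath := lintegral_congr_ae (μ := μ) <| by
    filter_upwards [ae_exists_mem_of_uniform hX hindep hunif h₁,
      ae_exists_mem_of_uniform hX hindep hunif h₂, ae_exists_mem_of_uniform hX hindep hunif h₃]
      with ω hω₁ hω₂ hω₃
    exact congrArg (fun n : ℕ => (n : ℝ≥0∞)) (max_firstHit_add_firstHit_union hω₁ hω₂ hω₃)
  simp only [Nat.cast_add] at hpath
  rwa [lintegral_add_left (by fun_prop), lintegral_add_left (by fun_prop),
    lintegral_add_left (by fun_prop), lintegral_add_left (by fun_prop),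
    lintegral_add_left (by fun_prop), lintegral_add_left (by fun_prop),
    hE _ h₁, hE _ h₂, hE _ h₃, hE _ (h₁.mono Set.subset_union_left),
    hE _ (h₁.mono Set.subset_union_left), hE _ (h₂.mono Set.subset_union_left),
    hE _ (h₁.mono (Set.subset_union_left.trans Set.subset_union_left))] at hpath

lemma lintegral_min_hitTime_collectTime_of_uniform (hX : ∀ t, Measurable (X t))
    (hindep : iIndepFun X μ) (hunif : ∀ t c, μ {ω | X t ω = c} = (Fintype.card H : ℝ≥0∞)⁻¹)
    {c a₁ a₂ a₃ : H} (h₁₂ : a₁ ≠ a₂) (h₁₃ : a₁ ≠ a₃) (h₂₃ : a₂ ≠ a₃)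
    (hc₁ : c ≠ a₁) (hc₂ : c ≠ a₂) (hc₃ : c ≠ a₃) :
    ∫⁻ ω, ((min (hitTime X c ω) (collectTime X {a₁, a₂, a₃} ω) : ℕ) : ℝ≥0∞) ∂μ =
      3 * Fintype.card H / 4 := by
  have hmax : ∫⁻ ω, ((min (hitTime X c ω) (collectTime X {a₁, a₂, a₃} ω) : ℕ) : ℝ≥0∞) ∂μ =
      ∫⁻ ω, ((max (firstHit X {c, a₁} ω) (max (firstHit X {c, a₂} ω) (firstHit X {c, a₃} ω)) :
        ℕ) : ℝ≥0∞) ∂μ :=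
    lintegral_congr_ae <| (ae_forall_exists_eq_of_uniform hX hindep hunif).mono fun ω hω =>
      congrArg Nat.cast (min_hitTime_collectTime_eq_max_firstHit hω c a₁ a₂ a₃)
  have key := lintegral_max_firstHit_of_uniform hX hindep hunif
    (Set.insert_nonempty c {a₁}) (Set.insert_nonempty c {a₂}) (Set.insert_nonempty c {a₃})
  have h2 : ∀ {a}, c ≠ a → ({c, a} : Set H).ncard = 2 := Set.ncard_pair
  have h3 : ∀ {a b}, c ≠ a → c ≠ b → a ≠ b → ({c, a} ∪ {c, b} : Set H).ncard = 3 := by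
    intro a b hca hcb hab
    rw [← Set.insert_union_distrib, Set.singleton_union]
    exact Set.ncard_eq_three.2 ⟨c, a, b, hca, hcb, hab, rfl⟩
  have h4 : ({c, a₁} ∪ {c, a₂} ∪ {c, a₃} : Set H).ncard = 4 := by
    rw [← Set.insert_union_distrib, ← Set.insert_union_distrib, Set.singleton_union,
      Set.insert_union, Set.singleton_union]
    simp [Set.ncard_insert_of_notMem, *]
  rw [← hmax, h2 hc₁, h2 hc₂, h2 hc₃, h3 hc₁ hc₂ h₁₂, h3 hc₁ hc₃ h₁₃, h3 hc₂ hc₃ h₂₃, h4] at key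
  simp only [Nat.cast_ofNat, ENNReal.add_thirds] at key
  have hN : (Fintype.card H : ℝ≥0∞) ≠ ⊤ := ENNReal.natCast_ne_top _
  have harith : ∀ N : ℝ≥0∞, N ≠ ⊤ → 3 * N / 4 + N = N / 2 + N / 2 + N / 2 + N / 4 := by
    intro N hN
    lift N to NNReal using hN
    norm_cast
    ring
  exact (ENNReal.add_left_inj hN).1 (key.trans (harith _ hN).symm)

end UniformDraws

theorem time_sharing_delay_general
    {Ω : Type*} [MeasurableSpace Ω] (μ : Measure Ω) [IsProbabilityMeasure μ]
    {H : Type*} [Fintype H] [MeasurableSpace H] [MeasurableSingletonClass H]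
    (N : ℕ) (hcard : Fintype.card H = N)
    (X : ℕ → Ω → H) (hmeas : ∀ t, Measurable (X t))
    (hindep : iIndepFun X μ)
    (hunif : ∀ t, ∀ c : H, μ {ω | X t ω = c} = (N : ENNReal)⁻¹)
    (c a₁ a₂ a₃ : H)
    (h₁₂ : a₁ ≠ a₂) (h₁₃ : a₁ ≠ a₃) (h₂₃ : a₂ ≠ a₃)
    (hc₁ : c ≠ a₁) (hc₂ : c ≠ a₂) (hc₃ : c ≠ a₃)
    (α : ℝ) (hα0 : 0 ≤ α)
    (B : Ω → Bool) (hBmeas : Measurable B)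
    (hBdist : μ {ω | B ω = true} = ENNReal.ofReal α)
    (hBindep : IndepFun B (fun ω => fun t => X t ω) μ)
    (D : Ω → ℕ)
    (hD : ∀ ω, D ω = if B ω then min (hitTime X c ω) (collectTime X {a₁, a₂, a₃} ω)
      else hitTime X c ω) :
    ∫ ω, (D ω : ℝ) ∂μ = (1 - α) * N + α * ((3 / 4) * N) ∧
      (1 - α) * (N : ℝ) + α * ((3 / 4) * N) = (1 - α / 4) * N := by
  subst hcard
  refine ⟨?_, by ring⟩
  -- `hitTime π c (fun t => X t ω)` unfolds to `hitTime X c ω`, so `D` is a function of `B` and of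
  -- the path `fun t => X t ω`, as `hBindep` requires.
  let π : ℕ → (ℕ → H) → H := fun t y => y t
  have hπ : ∀ t, Measurable (π t) := measurable_pi_apply
  have hlint : ∫⁻ ω, (D ω : ℝ≥0∞) ∂μ =
      μ {ω | B ω = true} * (3 * Fintype.card H / 4) + μ {ω | B ω = false} * Fintype.card H := by
    simp_rw [hD, apply_ite (fun n : ℕ => (n : ℝ≥0∞))]
    refine (lintegral_ite_eq_of_indepFun hBmeas (measurable_pi_lambda _ hmeas) hBindep
      (f := fun y => ((min (hitTime π c y) (collectTime π {a₁, a₂, a₃} y) : ℕ) : ℝ≥0∞))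
      (g := fun y => (hitTime π c y : ℝ≥0∞))
      (measurable_from_nat.comp ((measurable_collectTime hπ _).min (measurable_collectTime hπ _)))
      (measurable_from_nat.comp (measurable_collectTime hπ _))).trans ?_
    exact congr_arg₂ (fun x y => μ {ω | B ω = true} * x + μ {ω | B ω = false} * y)
      (lintegral_min_hitTime_collectTime_of_uniform hmeas hindep hunif h₁₂ h₁₃ h₂₃ hc₁ hc₂ hc₃)
      (lintegral_hitTime_of_uniform hmeas hindep hunif c)
  have hDmeas : Measurable D := by
    rw [funext hD]
    exact Measurable.ite (hBmeas (measurableSet_singleton true))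
      ((measurable_collectTime hmeas _).min (measurable_collectTime hmeas _))
      (measurable_collectTime hmeas _)
  have htrue : μ.real {ω | B ω = true} = α := by
    rw [measureReal_def, hBdist, ENNReal.toReal_ofReal hα0]
  rw [integral_natCast_eq_toReal_lintegral hDmeas, hlint, ENNReal.toReal_add (by finiteness)
    (by finiteness), ENNReal.toReal_mul, ENNReal.toReal_mul, ← measureReal_def,
    ← measureReal_def, measureReal_setOf_eq_false hBmeas, htrue]
  simp only [ENNReal.toReal_div, ENNReal.toReal_mul, ENNReal.toReal_ofNat, ENNReal.toReal_natCast]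
  ring

/-- Time-sharing delay: with probability `α` (flag `B = true`, independent of the draws)
decode by the first-to-complete rule at time `min(τ_c, σ_{a₁,a₂,a₃})`, and otherwise
decode by the complement-only rule at time `τ_c`.  The average delay is
`E[D] = (1−α)·N + α·(3/4)·N = (1−α/4)·N`. -/
theorem time_sharing_delay
    {Ω : Type*} [MeasurableSpace Ω] (μ : Measure Ω) [IsProbabilityMeasure μ]
    {H : Type*} [Fintype H] [MeasurableSpace H] [MeasurableSingletonClass H]
    (N : ℕ) (hN : 4 ≤ N) (hcard : Fintype.card H = N)
    (X : ℕ → Ω → H) (hmeas : ∀ t, Measurable (X t))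
    (hindep : iIndepFun X μ)
    (hunif : ∀ t, ∀ c : H, μ {ω | X t ω = c} = (N : ENNReal)⁻¹)
    (c a₁ a₂ a₃ : H)
    (h₁₂ : a₁ ≠ a₂) (h₁₃ : a₁ ≠ a₃) (h₂₃ : a₂ ≠ a₃)
    (hc₁ : c ≠ a₁) (hc₂ : c ≠ a₂) (hc₃ : c ≠ a₃)
    (α : ℝ) (hα0 : 0 ≤ α) (hα1 : α ≤ 1)
    (B : Ω → Bool) (hBmeas : Measurable B)
    (hBdist : μ {ω | B ω = true} = ENNReal.ofReal α)
    (hBindep : IndepFun B (fun ω => fun t => X t ω) μ)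
    (D : Ω → ℕ)
    (hD : ∀ ω, D ω = if B ω then min (hitTime X c ω) (collectTime X {a₁, a₂, a₃} ω)
      else hitTime X c ω) :
    ∫ ω, (D ω : ℝ) ∂μ = (1 - α) * N + α * ((3 / 4) * N) ∧
      (1 - α) * (N : ℝ) + α * ((3 / 4) * N) = (1 - α / 4) * N :=
  time_sharing_delay_general μ N hcard X hmeas hindep hunif c a₁ a₂ a₃ h₁₂ h₁₃ h₂₃ hc₁ hc₂ hc₃ α hα0
    B hBmeas hBdist hBindep D hD
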